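/- Let λ be a real constant and let f : ℝⁿ → ℝ be a smooth function satisfying Σ_{i,j} g^{ij} f_{ij} = -f + Σ_i x_i f_i + λ√(1+|Df|²) on ℝⁿ. Set ψ = log det(g_{ij}). Then at every point of ℝⁿ, L_{(λ,f)}ψ = −2 Σ_{i,j,p,k,q,l} g^{ij} g^{pk} g^{ql} f_{pi} f_q f_{kj} f_l + 2 Σ_{i,j,p,k,q,l} g^{ij} g^{pk} g^{ql} f_{qi} f_p f_{kj} f_l + 2 Σ_{i,j,p,q} g^{ij} g^{pq} f_{pi} f_{qj}, where L_{(λ,f)} is taken with coefficient matrix (a_{ij}) = (g_{ij}). -/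

import Mathlib

/-- The `i`-th partial derivative of a function `f : ℝⁿ → ℝ`. -/
noncomputable def pd {n : ℕ} (f : (Fin n → ℝ) → ℝ) (i : Fin n) (x : Fin n → ℝ) : ℝ :=
  fderiv ℝ f x (Pi.single i 1)

/-- The induced metric `g_{ij} = δ_{ij} + f_i f_j` of the graph of `f`. -/
noncomputable def gMat {n : ℕ} (f : (Fin n → ℝ) → ℝ) (x : Fin n → ℝ) :
    Matrix (Fin n) (Fin n) ℝ :=
  Matrix.of fun i j => (if i = j then (1 : ℝ) else 0) + pd f i x * pd f j x

/-- The inverse metric `(g^{ij})`. -/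
noncomputable def gInv {n : ℕ} (f : (Fin n → ℝ) → ℝ) (x : Fin n → ℝ) :
    Matrix (Fin n) (Fin n) ℝ :=
  (gMat f x)⁻¹

/-- The operator `L_{(λ,f)}ψ = Σ a^{ij} ψ_{ij} − ⟨x, Dψ⟩ − λ⟨Df, Dψ⟩/√(1+|Df|²)`, where
`(a^{ij})` is the inverse of the matrix field `a`. -/
noncomputable def Lop {n : ℕ} (lam : ℝ) (f : (Fin n → ℝ) → ℝ)
    (a : (Fin n → ℝ) → Matrix (Fin n) (Fin n) ℝ)
    (ψ : (Fin n → ℝ) → ℝ) (x : Fin n → ℝ) : ℝ :=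
  (∑ i, ∑ j, (a x)⁻¹ i j * pd (pd ψ j) i x)
    - (∑ i, x i * pd ψ i x)
    - lam * (∑ i, pd f i x * pd ψ i x) / Real.sqrt (1 + ∑ i, (pd f i x) ^ 2)

notation "SM" => ContDiff ℝ ((⊤:ℕ∞):WithTop ℕ∞)


variable {n : ℕ}


lemma dAt {f : (Fin n → ℝ) → ℝ} (hf : SM f) {x : Fin n → ℝ} : DifferentiableAt ℝ f x :=
  (hf.differentiable (by simp)).differentiableAt

lemma pd_smooth {f : (Fin n → ℝ) → ℝ} (hf : SM f) (i : Fin n) : SM (pd f i) := by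
  have h1 : SM (fderiv ℝ f) := (contDiff_infty_iff_fderiv.mp hf).2
  exact h1.clm_apply contDiff_const

lemma pd_congr {f g : (Fin n → ℝ) → ℝ} (h : ∀ y, f y = g y) (i : Fin n) (x) :
    pd f i x = pd g i x := by
  have : f = g := funext h
  rw [pd, pd, this]

lemma pd_add {f g : (Fin n → ℝ) → ℝ} (hf : SM f) (hg : SM g) (i : Fin n) (x) :
    pd (fun y => f y + g y) i x = pd f i x + pd g i x := by
  unfold pd; rw [fderiv_fun_add (dAt hf) (dAt hg)]; simp

lemma pd_neg (f : (Fin n → ℝ) → ℝ) (i : Fin n) (x) :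
    pd (fun y => -f y) i x = -pd f i x := by
  unfold pd; rw [fderiv_fun_neg]; simp

lemma pd_mul {f g : (Fin n → ℝ) → ℝ} (hf : SM f) (hg : SM g) (i : Fin n) (x) :
    pd (fun y => f y * g y) i x = pd f i x * g x + f x * pd g i x := by
  unfold pd; rw [fderiv_fun_mul (dAt hf) (dAt hg)]; simp; ring

lemma pd_const (c : ℝ) (i : Fin n) (x) : pd (fun _ => c) i x = 0 := by
  unfold pd; rw [fderiv_fun_const]; simp

lemma pd_coord (j i : Fin n) (x) : pd (fun y => y j) i x = if i = j then 1 else 0 := by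
  unfold pd
  have h : (fun y : Fin n → ℝ => y j) = ⇑(ContinuousLinearMap.proj (R := ℝ) (φ := fun _ : Fin n => ℝ) j) := rfl
  rw [h, ContinuousLinearMap.fderiv]
  simp [Pi.single_apply, eq_comm]

lemma pd_sum {ι : Type*} (s : Finset ι) (F : ι → (Fin n → ℝ) → ℝ)
    (hF : ∀ k ∈ s, SM (F k)) (i : Fin n) (x) :
    pd (fun y => ∑ k ∈ s, F k y) i x = ∑ k ∈ s, pd (F k) i x := by
  unfold pd
  rw [fderiv_fun_sum (fun k hk => dAt (hF k hk))]
  simp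

lemma pd_inv {g : (Fin n → ℝ) → ℝ} (hg : SM g) (hg0 : ∀ y, g y ≠ 0) (i : Fin n) (x) :
    pd (fun y => (g y)⁻¹) i x = -pd g i x / (g x)^2 := by
  unfold pd
  rw [show (fun y => (g y)⁻¹) = (fun t : ℝ => t⁻¹) ∘ g from rfl]
  rw [((hasDerivAt_inv (hg0 x)).comp_hasFDerivAt x (dAt hg).hasFDerivAt).fderiv]
  simp
  field_simp

lemma SMinv {g : (Fin n → ℝ) → ℝ} (hg : SM g) (hg0 : ∀ y, g y ≠ 0) :
    SM (fun y => (g y)⁻¹) := hg.inv hg0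

lemma pd_div {f g : (Fin n → ℝ) → ℝ} (hf : SM f) (hg : SM g) (hg0 : ∀ y, g y ≠ 0)
    (i : Fin n) (x) :
    pd (fun y => f y / g y) i x = (pd f i x * g x - f x * pd g i x) / (g x)^2 := by
  have h1 : pd (fun y => f y / g y) i x = pd (fun y => f y * (g y)⁻¹) i x := by
    apply pd_congr; intro y; rw [div_eq_mul_inv]
  rw [h1, pd_mul hf (SMinv hg hg0), pd_inv hg hg0]
  have hgx := hg0 x
  field_simp
  ring

lemma pd_log {g : (Fin n → ℝ) → ℝ} (hg : SM g) (hg0 : ∀ y, 0 < g y) (i : Fin n) (x) :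
    pd (fun y => Real.log (g y)) i x = pd g i x / g x := by
  unfold pd
  rw [show (fun y => Real.log (g y)) = Real.log ∘ g from rfl]
  rw [((Real.hasDerivAt_log (hg0 x).ne').comp_hasFDerivAt x (dAt hg).hasFDerivAt).fderiv]
  simp
  field_simp

lemma pd_sqrt {g : (Fin n → ℝ) → ℝ} (hg : SM g) (hg0 : ∀ y, 0 < g y) (i : Fin n) (x) :
    pd (fun y => Real.sqrt (g y)) i x = pd g i x / (2 * Real.sqrt (g x)) := by
  unfold pd
  rw [show (fun y => Real.sqrt (g y)) = (fun t => Real.sqrt t) ∘ g from rfl]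
  rw [((Real.hasDerivAt_sqrt (hg0 x).ne').comp_hasFDerivAt x (dAt hg).hasFDerivAt).fderiv]
  simp
  field_simp

lemma pd_sq {g : (Fin n → ℝ) → ℝ} (hg : SM g) (i : Fin n) (x) :
    pd (fun y => (g y)^2) i x = 2 * g x * pd g i x := by
  have h2 : pd (fun y => (g y)^2) i x = pd (fun y => g y * g y) i x := by
    apply pd_congr; intro y; ring
  rw [h2, pd_mul hg hg]; ring

lemma pd_pd_symm {f : (Fin n → ℝ) → ℝ} (hf : SM f) (i j : Fin n) (x) :
    pd (pd f j) i x = pd (pd f i) j x := by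
  have hd : Differentiable ℝ f := hf.differentiable (by simp)
  have hfd : SM (fderiv ℝ f) := (contDiff_infty_iff_fderiv.mp hf).2
  have key : ∀ v w, fderiv ℝ (fderiv ℝ f) x v w = fderiv ℝ (fderiv ℝ f) x w v :=
    second_derivative_symmetric (fun y => (hd y).hasFDerivAt) ((hfd.differentiable (by simp)).differentiableAt).hasFDerivAt
  have ha : ∀ (k : Fin n) (v : Fin n → ℝ), pd (fun y => fderiv ℝ f y v) k x
      = fderiv ℝ (fderiv ℝ f) x (Pi.single k 1) v := by
    intro k v
    unfold pd
    rw [fderiv_clm_apply ((hfd.differentiable (by simp)).differentiableAt) (differentiableAt_const v)]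
    simp
  show pd (fun y => fderiv ℝ f y (Pi.single j 1)) i x = pd (fun y => fderiv ℝ f y (Pi.single i 1)) j x
  rw [ha, ha, key]

section Main
variable {f : (Fin n → ℝ) → ℝ} (hf : SM f)

lemma gdet (x : Fin n → ℝ) : (gMat f x).det = 1 + ∑ i, (pd f i x)^2 := by
  have h : gMat f x = 1 + Matrix.replicateCol (Fin 1) (fun i => pd f i x) * Matrix.replicateRow (Fin 1) (fun i => pd f i x) := by
    ext i j
    simp [gMat, Matrix.one_apply, Matrix.replicateCol, Matrix.replicateRow, Matrix.mul_apply, eq_comm]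
  rw [h]
  refine (Matrix.det_one_add_replicateCol_mul_replicateRow (ι := Fin 1) _ _).trans ?_
  simp [dotProduct, sq]

lemma ginv_eq (x : Fin n → ℝ) (p q : Fin n) :
    gInv f x p q = (if p = q then 1 else 0)
      - pd f p x * pd f q x / (1 + ∑ i, (pd f i x)^2) := by
  set d := 1 + ∑ i, (pd f i x)^2 with hd
  have hd0 : 0 < d := by
    have : (0:ℝ) ≤ ∑ i, (pd f i x)^2 := Finset.sum_nonneg (fun i _ => sq_nonneg _)
    linarith
  have hB : gMat f x * Matrix.of (fun p q => (if p = q then (1:ℝ) else 0) - pd f p x * pd f q x / d) = 1 := by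
    ext i k
    simp only [Matrix.mul_apply, gMat, Matrix.of_apply, Matrix.one_apply]
    have expand : ∀ j : Fin n,
        ((if i = j then (1:ℝ) else 0) + pd f i x * pd f j x)
          * ((if j = k then (1:ℝ) else 0) - pd f j x * pd f k x / d)
        = ((if i = j then (1:ℝ) else 0) * (if j = k then (1:ℝ) else 0))
          + pd f i x * ((if j = k then 1 else 0) * pd f j x)
          - ((if i = j then 1 else 0) * pd f j x) * pd f k x / d
          - pd f i x * pd f k x / d * (pd f j x * pd f j x) := by
      intro j; ring
    rw [Finset.sum_congr rfl (fun j _ => expand j)]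
    simp only [Finset.sum_sub_distrib, Finset.sum_add_distrib, ← Finset.mul_sum, ← Finset.sum_mul]
    have e1 : ∑ j, (if i = j then (1:ℝ) else 0) * (if j = k then (1:ℝ) else 0)
        = if i = k then 1 else 0 := by
      simp [Finset.sum_ite_eq]
    have e2 : ∑ j, (if j = k then (1:ℝ) else 0) * pd f j x = pd f k x := by
      simp [Finset.sum_ite_eq']
    have e3 : ∑ j, (if i = j then (1:ℝ) else 0) * pd f j x * pd f k x / d
        = pd f i x * pd f k x / d := by
      rw [← Finset.sum_div]
      simp [ite_mul, Finset.sum_ite_eq]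
    have e4 : ∑ j, pd f j x * pd f j x = d - 1 := by
      rw [hd]; simp [sq]
    rw [e1, e2, e3, e4]
    by_cases hik : i = k
    · field_simp [hik]
      ring
    · field_simp [hik]
      ring
  have := Matrix.inv_eq_right_inv hB
  rw [gInv, this]
  simp [Matrix.of_apply]
end Main


-- extra toolkit
lemma pd_sub {f g : (Fin n → ℝ) → ℝ} (hf : SM f) (hg : SM g) (i : Fin n) (x) :
    pd (fun y => f y - g y) i x = pd f i x - pd g i x := by
  unfold pd; rw [fderiv_fun_sub (dAt hf) (dAt hg)]; simp

lemma pd_cmul {g : (Fin n → ℝ) → ℝ} (hg : SM g) (c : ℝ) (i : Fin n) (x) :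
    pd (fun y => c * g y) i x = c * pd g i x := by
  rw [pd_mul contDiff_const hg i x, pd_const]
  ring


lemma sum_if (i : Fin n) (v : Fin n → ℝ) :
    ∑ j, (if i = j then (1:ℝ) else 0) * v j = v i := by
  simp [ite_mul, Finset.sum_ite_eq]

lemma sum_pull (c : ℝ) (v : Fin n → ℝ) : ∑ j, c * v j = c * ∑ j, v j :=
  (Finset.mul_sum _ _ _).symm

lemma sum_pull' (c : ℝ) (v : Fin n → ℝ) : ∑ j, v j * c = (∑ j, v j) * c :=
  (Finset.sum_mul _ _ _).symm

lemma sum_pull2 (c : ℝ) (F : Fin n → Fin n → ℝ) :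
    ∑ i, ∑ j, c * F i j = c * ∑ i, ∑ j, F i j := by
  calc ∑ i, ∑ j, c * F i j = ∑ i, c * ∑ j, F i j :=
        Finset.sum_congr rfl fun i _ => sum_pull c (F i)
    _ = c * ∑ i, ∑ j, F i j := sum_pull c _
lemma sum_pull4 (c : ℝ) (F : Fin n → Fin n → Fin n → Fin n → ℝ) :
    ∑ i, ∑ j, ∑ p, ∑ k, c * F i j p k = c * ∑ i, ∑ j, ∑ p, ∑ k, F i j p k := by
  calc ∑ i, ∑ j, ∑ p, ∑ k, c * F i j p k = ∑ i, ∑ j, c * ∑ p, ∑ k, F i j p k :=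
        Finset.sum_congr rfl fun i _ => Finset.sum_congr rfl fun j _ => sum_pull2 c (F i j)
    _ = c * _ := sum_pull2 c _

section Alg
variable (U : Fin n → ℝ) (d : ℝ) (G : Fin n → Fin n → ℝ)
  (hG : ∀ i j, G i j = (if i = j then (1:ℝ) else 0) - U i * U j / d)

include hG in
lemma csum (q : Fin n) (v : Fin n → ℝ) :
    ∑ l, G q l * v l = v q - U q * (∑ l, U l * v l) / d := by
  have h1 : ∀ l, G q l * v l
      = (if q = l then (1:ℝ) else 0) * v l - U q * (U l * v l) / d := by
    intro l; rw [hG]; ring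
  rw [Finset.sum_congr rfl (fun l _ => h1 l), Finset.sum_sub_distrib, sum_if]
  rw [← Finset.sum_div, ← Finset.mul_sum]

include hG in
lemma csumU (hd : d = 1 + ∑ i, U i * U i) (hd0 : d ≠ 0) (q : Fin n) :
    ∑ l, G q l * U l = U q / d := by
  rw [csum U d G hG q U]
  field_simp
  rw [hd]; ring

variable (H : Fin n → Fin n → ℝ) (hsym : ∀ i j, H i j = H j i)

include hsym in
lemma symR (p : Fin n) : ∑ q, U q * H q p = ∑ k, U k * H p k :=
  Finset.sum_congr rfl fun q _ => by rw [hsym]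

-- D1 : Σ_ij G i j * (Σ_q H i q H j q) = sA - sB/d
include hG hsym in
lemma redD1 :
    ∑ i, ∑ j, G i j * (∑ q, H i q * H j q)
      = (∑ i, ∑ j, H i j * H i j)
        - (∑ i, (∑ k, U k * H i k) * (∑ k, U k * H i k)) / d := by
  have step1 : ∀ i, ∑ j, G i j * (∑ q, H i q * H j q)
      = (∑ q, H i q * H i q)
        - U i * (∑ j, U j * (∑ q, H i q * H j q)) / d := fun i =>
    csum U d G hG i _
  rw [Finset.sum_congr rfl fun i _ => step1 i, Finset.sum_sub_distrib]
  congr 1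
  have inner : ∀ i, ∑ j, U j * (∑ q, H i q * H j q)
      = ∑ q, H i q * (∑ k, U k * H q k) := by
    intro i
    calc ∑ j, U j * (∑ q, H i q * H j q)
        = ∑ j, ∑ q, H i q * (U j * H j q) := by
          refine Finset.sum_congr rfl fun j _ => ?_
          rw [Finset.mul_sum]
          exact Finset.sum_congr rfl fun q _ => by ring
      _ = ∑ q, ∑ j, H i q * (U j * H j q) := Finset.sum_comm
      _ = ∑ q, H i q * (∑ j, U j * H j q) := by
          refine Finset.sum_congr rfl fun q _ => ?_
          rw [Finset.mul_sum]
      _ = ∑ q, H i q * (∑ k, U k * H q k) := by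
          refine Finset.sum_congr rfl fun q _ => ?_
          rw [symR U H hsym q]
  have repl : ∀ i : Fin n, U i * (∑ j, U j * (∑ q, H i q * H j q)) / d
      = U i * (∑ q, H i q * (∑ k, U k * H q k)) / d := fun i => by rw [inner i]
  rw [Finset.sum_congr rfl fun i _ => repl i, ← Finset.sum_div]
  congr 1
  calc ∑ i, U i * ∑ q, H i q * (∑ k, U k * H q k)
      = ∑ i, ∑ q, ((∑ k, U k * H q k) * (U i * H i q)) := by
        refine Finset.sum_congr rfl fun i _ => ?_
        rw [Finset.mul_sum]
        exact Finset.sum_congr rfl fun q _ => by ring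
    _ = ∑ q, ∑ i, ((∑ k, U k * H q k) * (U i * H i q)) := Finset.sum_comm
    _ = ∑ q, (∑ k, U k * H q k) * (∑ i, U i * H i q) := by
        refine Finset.sum_congr rfl fun q _ => ?_
        rw [Finset.mul_sum]
    _ = ∑ q, (∑ k, U k * H q k) * (∑ k, U k * H q k) := by
        refine Finset.sum_congr rfl fun q _ => by rw [symR U H hsym q]

-- D3 : Σ_ij G i j * R j * R i = sB - sQ * sQ / d
include hG in
lemma redD3 :
    ∑ i, ∑ j, G i j * (∑ k, U k * H j k) * (∑ k, U k * H i k)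
      = (∑ i, (∑ k, U k * H i k) * (∑ k, U k * H i k))
        - (∑ i, U i * (∑ k, U k * H i k)) * (∑ i, U i * (∑ k, U k * H i k)) / d := by
  have step1 : ∀ i, ∑ j, G i j * (∑ k, U k * H j k) * (∑ k, U k * H i k)
      = ((∑ k, U k * H i k)
        - U i * (∑ j, U j * (∑ k, U k * H j k)) / d) * (∑ k, U k * H i k) := by
    intro i
    rw [sum_pull' ((∑ k, U k * H i k)) (fun j => G i j * (∑ k, U k * H j k)),
      csum U d G hG i (fun j => (∑ k, U k * H j k))]
  rw [Finset.sum_congr rfl fun i _ => step1 i]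
  have expand : ∀ i, ((∑ k, U k * H i k)
        - U i * (∑ j, U j * (∑ k, U k * H j k)) / d) * (∑ k, U k * H i k)
      = (∑ k, U k * H i k) * (∑ k, U k * H i k)
        - (∑ j, U j * (∑ k, U k * H j k)) * (U i * (∑ k, U k * H i k)) / d := by
    intro i; ring
  rw [Finset.sum_congr rfl fun i _ => expand i, Finset.sum_sub_distrib]
  congr 1
  rw [← Finset.sum_div]
  congr 1
  rw [sum_pull]


variable (hd : d = 1 + ∑ i, U i * U i) (hd0 : d ≠ 0)

-- V4 = Σ_{ijpk} G ij G pk H i p H jk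
include hG in
lemma redV4 :
    ∑ i, ∑ j, ∑ p, ∑ k, G i j * G p k * H i p * H j k
      = (∑ i, ∑ j, G i j * (∑ q, H i q * H j q))
        - (∑ i, ∑ j, G i j * (∑ k, U k * H j k) * (∑ k, U k * H i k)) / d := by
  have e1 : ∀ i j p, ∑ k, G i j * G p k * H i p * H j k
      = G i j * H i p * (H j p - U p * (∑ k, U k * H j k) / d) := by
    intro i j p
    have h : ∀ k, G i j * G p k * H i p * H j k
        = (G i j * H i p) * (G p k * H j k) := fun k => by ring
    rw [Finset.sum_congr rfl fun k _ => h k, sum_pull, csum U d G hG p (fun k => H j k)]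
  have e2 : ∀ i j, ∑ p, ∑ k, G i j * G p k * H i p * H j k
      = G i j * (∑ q, H i q * H j q)
        - G i j * (∑ k, U k * H j k) * (∑ k, U k * H i k) / d := by
    intro i j
    rw [Finset.sum_congr rfl fun p _ => e1 i j p]
    have h : ∀ p, G i j * H i p * (H j p - U p * (∑ k, U k * H j k) / d)
        = G i j * (H i p * H j p)
          - (G i j * (∑ k, U k * H j k) / d) * (U p * H i p) := fun p => by ring
    rw [Finset.sum_congr rfl fun p _ => h p, Finset.sum_sub_distrib, sum_pull, sum_pull]
    ring
  rw [Finset.sum_congr rfl fun i _ =>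
        Finset.sum_congr rfl fun j _ => e2 i j]
  rw [Finset.sum_congr rfl fun i _ => Finset.sum_sub_distrib _ _, Finset.sum_sub_distrib]
  congr 1
  rw [Finset.sum_congr rfl fun i _ => (Finset.sum_div Finset.univ _ d).symm, ← Finset.sum_div]

include hG hd hd0 in
lemma red6a :
    ∑ i, ∑ j, ∑ p, ∑ k, ∑ q, ∑ l,
        G i j * G p k * G q l * H i p * U q * H j k * U l
      = ((∑ i, U i * U i) / d) * ∑ i, ∑ j, ∑ p, ∑ k, G i j * G p k * H i p * H j k := by
  have e1 : ∀ i j p k q, ∑ l, G i j * G p k * G q l * H i p * U q * H j k * U l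
      = ((G i j * G p k * H i p * H j k) / d) * (U q * U q) := by
    intro i j p k q
    have h : ∀ l, G i j * G p k * G q l * H i p * U q * H j k * U l
        = (G i j * G p k * H i p * U q * H j k) * (G q l * U l) := fun l => by ring
    rw [Finset.sum_congr rfl fun l _ => h l, sum_pull, csumU U d G hG hd hd0 q]
    ring
  have e2 : ∀ i j p k, ∑ q, ∑ l, G i j * G p k * G q l * H i p * U q * H j k * U l
      = ((∑ i, U i * U i) / d) * (G i j * G p k * H i p * H j k) := by
    intro i j p k
    rw [Finset.sum_congr rfl fun q _ => e1 i j p k q, sum_pull]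
    ring
  rw [Finset.sum_congr rfl fun i _ => Finset.sum_congr rfl fun j _ =>
        Finset.sum_congr rfl fun p _ => Finset.sum_congr rfl fun k _ => e2 i j p k]
  exact sum_pull4 _ _

include hG hd hd0 in
lemma red6b :
    ∑ i, ∑ j, ∑ p, ∑ k, ∑ q, ∑ l,
        G i j * G p k * G q l * H i q * U p * H j k * U l
      = ((1 - (∑ i, U i * U i) / d) / d)
          * ∑ i, ∑ j, G i j * (∑ k, U k * H j k) * (∑ k, U k * H i k) := by
  have e1 : ∀ i j p k q, ∑ l, G i j * G p k * G q l * H i q * U p * H j k * U l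
      = ((G i j * G p k * U p * H j k) / d) * (H i q * U q) := by
    intro i j p k q
    have h : ∀ l, G i j * G p k * G q l * H i q * U p * H j k * U l
        = (G i j * G p k * H i q * U p * H j k) * (G q l * U l) := fun l => by ring
    rw [Finset.sum_congr rfl fun l _ => h l, sum_pull, csumU U d G hG hd hd0 q]
    ring
  have e2 : ∀ i j p k, ∑ q, ∑ l, G i j * G p k * G q l * H i q * U p * H j k * U l
      = ((G i j * U p * (∑ k, U k * H i k)) / d) * (G p k * H j k) := by
    intro i j p k
    rw [Finset.sum_congr rfl fun q _ => e1 i j p k q, sum_pull]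
    have h : ∑ q, H i q * U q = ∑ k, U k * H i k :=
      Finset.sum_congr rfl fun q _ => by ring
    rw [h]; ring
  have e3 : ∀ i j p, ∑ k, ∑ q, ∑ l, G i j * G p k * G q l * H i q * U p * H j k * U l
      = ((G i j * (∑ k, U k * H i k)) / d)
          * (U p * H j p - (U p * U p) * ((∑ k, U k * H j k) / d)) := by
    intro i j p
    rw [Finset.sum_congr rfl fun k _ => e2 i j p k, sum_pull, csum U d G hG p (fun k => H j k)]
    ring
  have e4 : ∀ i j, ∑ p, ∑ k, ∑ q, ∑ l, G i j * G p k * G q l * H i q * U p * H j k * U l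
      = ((1 - (∑ i, U i * U i) / d) / d)
          * (G i j * (∑ k, U k * H j k) * (∑ k, U k * H i k)) := by
    intro i j
    rw [Finset.sum_congr rfl fun p _ => e3 i j p, sum_pull]
    have h : ∑ p, (U p * H j p - (U p * U p) * ((∑ k, U k * H j k) / d))
        = (∑ k, U k * H j k) - (∑ i, U i * U i) * ((∑ k, U k * H j k) / d) := by
      rw [Finset.sum_sub_distrib, sum_pull' ((∑ k, U k * H j k) / d)]
    rw [h]; ring
  rw [Finset.sum_congr rfl fun i _ => Finset.sum_congr rfl fun j _ => e4 i j]
  exact sum_pull2 _ _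

variable (T : Fin n → Fin n → Fin n → ℝ)

include hG in
lemma redD2 (hT : ∀ i j q, T i j q = T q i j) :
    ∑ i, ∑ j, G i j * (∑ q, U q * T i j q)
      = ∑ q, U q * (∑ p, ∑ k, G p k * T q p k) := by
  have e1 : ∀ i j, G i j * (∑ q, U q * T i j q)
      = ∑ q, U q * (G i j * T q i j) := by
    intro i j
    rw [Finset.mul_sum]
    exact Finset.sum_congr rfl fun q _ => by rw [hT i j q]; ring
  rw [Finset.sum_congr rfl fun i _ => Finset.sum_congr rfl fun j _ => e1 i j]
  rw [Finset.sum_congr rfl fun i _ => Finset.sum_comm, Finset.sum_comm]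
  exact Finset.sum_congr rfl fun q _ => sum_pull2 (U q) (fun i j => G i j * T q i j)

include hG hsym hd hd0 in
lemma key_algebra (xx : Fin n → ℝ) (lam w : ℝ) (hw0 : w ≠ 0)
    (hT : ∀ i j q, T i j q = T q i j)
    (heqd : ∀ i, ∑ p, ∑ q,
        ((-(((H i p * U q + U p * H i q) * d
              - U p * U q * (2 * ∑ k, U k * H i k)) / d^2)) * H p q
          + G p q * T i p q)
        = (∑ p, xx p * H i p) + lam * (2 * ∑ k, U k * H i k) / (2 * w)) :
    ∑ i, ∑ j, G i j * (((2 * ∑ q, (H i q * H j q + U q * T i j q)) * d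
          - (2 * ∑ k, U k * H j k) * (2 * ∑ k, U k * H i k)) / d^2)
      - (∑ i, xx i * (2 * (∑ k, U k * H i k) / d))
      - lam * (∑ i, U i * (2 * (∑ k, U k * H i k) / d)) / w
    = -2 * (∑ i, ∑ j, ∑ p, ∑ k, ∑ q, ∑ l,
          G i j * G p k * G q l * H i p * U q * H j k * U l)
      + 2 * (∑ i, ∑ j, ∑ p, ∑ k, ∑ q, ∑ l,
          G i j * G p k * G q l * H i q * U p * H j k * U l)
      + 2 * (∑ i, ∑ j, ∑ p, ∑ q, G i j * G p q * H i p * H j q) := by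
  -- the W computation from heqd
  have hW : ∀ q, ∑ p, ∑ k, G p k * T q p k
      = (∑ p, xx p * H q p) + lam * (2 * ∑ k, U k * H q k) / (2 * w)
        + 2 * (∑ p, H q p * (∑ k, U k * H p k)) / d
        - 2 * (∑ k, U k * H q k) * (∑ p, U p * (∑ k, U k * H p k)) / d^2 := by
    intro q
    have hsplit := heqd q
    rw [Finset.sum_congr rfl fun p _ => Finset.sum_add_distrib,
      Finset.sum_add_distrib] at hsplit
    have hNin : ∀ p, ∑ k,
        (-(((H q p * U k + U p * H q k) * d - U p * U k * (2 * ∑ k, U k * H q k)) / d^2)) * H p k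
        = -((H q p * (∑ k, U k * H p k)) / d)
          + -((∑ k, H q k * (U p * H p k)) / d)
          + (2 * (∑ k, U k * H q k) / d^2) * (U p * (∑ k, U k * H p k)) := by
      intro p
      have h : ∀ k, (-(((H q p * U k + U p * H q k) * d - U p * U k * (2 * ∑ k, U k * H q k)) / d^2)) * H p k
          = -((H q p * (U k * H p k)) / d) + -((H q k * (U p * H p k)) / d)
            + ((2 * (∑ k, U k * H q k) / d^2) * U p) * (U k * H p k) := by
        intro k; field_simp; ring
      rw [Finset.sum_congr rfl fun k _ => h k, Finset.sum_add_distrib,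
        Finset.sum_add_distrib]
      have t1 : ∑ k, -((H q p * (U k * H p k)) / d)
          = -((H q p * (∑ k, U k * H p k)) / d) := by
        rw [Finset.sum_neg_distrib, ← Finset.sum_div, sum_pull]
      have t2 : ∑ k, -((H q k * (U p * H p k)) / d)
          = -((∑ k, H q k * (U p * H p k)) / d) := by
        rw [Finset.sum_neg_distrib, ← Finset.sum_div]
      have t3 : ∑ k, ((2 * (∑ k, U k * H q k) / d^2) * U p) * (U k * H p k)
          = (2 * (∑ k, U k * H q k) / d^2) * (U p * (∑ k, U k * H p k)) := by
        rw [sum_pull]; ring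
      rw [t1, t2, t3]
    rw [Finset.sum_congr rfl fun p _ => hNin p, Finset.sum_add_distrib,
      Finset.sum_add_distrib] at hsplit
    have P1 : ∑ p, -((H q p * (∑ k, U k * H p k)) / d)
        = -((∑ p, H q p * (∑ k, U k * H p k)) / d) := by
      rw [Finset.sum_neg_distrib, ← Finset.sum_div]
    have P2 : ∑ p, -((∑ k, H q k * (U p * H p k)) / d)
        = -((∑ p, H q p * (∑ k, U k * H p k)) / d) := by
      rw [Finset.sum_neg_distrib, ← Finset.sum_div]
      congr 2
      calc ∑ p, ∑ k, H q k * (U p * H p k)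
          = ∑ k, ∑ p, H q k * (U p * H p k) := Finset.sum_comm
        _ = ∑ k, H q k * (∑ p, U p * H p k) := Finset.sum_congr rfl fun k _ => sum_pull _ _
        _ = ∑ k, H q k * (∑ j, U j * H k j) :=
            Finset.sum_congr rfl fun k _ => by rw [symR U H hsym k]
        _ = ∑ p, H q p * (∑ k, U k * H p k) := rfl
    have P3 : ∑ p, (2 * (∑ k, U k * H q k) / d^2) * (U p * (∑ k, U k * H p k))
        = (2 * (∑ k, U k * H q k) / d^2) * (∑ p, U p * (∑ k, U k * H p k)) := by
      exact sum_pull _ _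
    rw [P1, P2, P3] at hsplit
    linear_combination hsplit
  
  -- split the second-derivative double sum
  have hsplit1 : ∀ i j : Fin n, G i j * (((2 * ∑ q, (H i q * H j q + U q * T i j q)) * d
          - (2 * ∑ k, U k * H j k) * (2 * ∑ k, U k * H i k)) / d^2)
      = (2/d) * (G i j * (∑ q, H i q * H j q))
        + (2/d) * (G i j * (∑ q, U q * T i j q))
        - (4/d^2) * (G i j * (∑ k, U k * H j k) * (∑ k, U k * H i k)) := by
    intro i j
    rw [Finset.sum_add_distrib]
    field_simp
    ring
  have hSL1 : ∑ i, ∑ j, G i j * (((2 * ∑ q, (H i q * H j q + U q * T i j q)) * d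
          - (2 * ∑ k, U k * H j k) * (2 * ∑ k, U k * H i k)) / d^2)
      = (2/d) * (∑ i, ∑ j, G i j * (∑ q, H i q * H j q))
        + (2/d) * (∑ i, ∑ j, G i j * (∑ q, U q * T i j q))
        - (4/d^2) * (∑ i, ∑ j, G i j * (∑ k, U k * H j k) * (∑ k, U k * H i k)) := by
    rw [Finset.sum_congr rfl fun i _ => Finset.sum_congr rfl fun j _ => hsplit1 i j]
    simp only [Finset.sum_add_distrib, Finset.sum_sub_distrib]
    rw [sum_pull2, sum_pull2, sum_pull2]
  -- middle term via hW
  have hmid : ∑ i, ∑ j, G i j * (∑ q, U q * T i j q)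
      = (∑ p, xx p * (∑ k, U k * H p k))
        + (lam * 2 / (2 * w)) * (∑ i, U i * (∑ k, U k * H i k))
        + (2/d) * (∑ i, (∑ k, U k * H i k) * (∑ k, U k * H i k))
        - (2 * (∑ i, U i * (∑ k, U k * H i k)) / d^2) * (∑ i, U i * (∑ k, U k * H i k)) := by
    rw [redD2 U d G hG T hT]
    have e : ∀ q : Fin n, U q * (∑ p, ∑ k, G p k * T q p k)
        = U q * (∑ p, xx p * H q p)
          + (lam * 2 / (2 * w)) * (U q * (∑ k, U k * H q k))
          + (2/d) * (U q * (∑ p, H q p * (∑ k, U k * H p k)))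
          - (2 * (∑ p, U p * (∑ k, U k * H p k)) / d^2)
              * (U q * (∑ k, U k * H q k)) := by
      intro q
      rw [hW q]
      ring
    rw [Finset.sum_congr rfl fun q _ => e q]
    simp only [Finset.sum_add_distrib, Finset.sum_sub_distrib]
    rw [sum_pull ((lam * 2 / (2 * w))), sum_pull (2/d), sum_pull (2 * (∑ p, U p * (∑ k, U k * H p k)) / d^2)]
    have eX : ∑ q, U q * (∑ p, xx p * H q p) = ∑ p, xx p * (∑ k, U k * H p k) := by
      calc ∑ q, U q * (∑ p, xx p * H q p)
          = ∑ q, ∑ p, xx p * (U q * H q p) := by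
            refine Finset.sum_congr rfl fun q _ => ?_
            rw [Finset.mul_sum]
            exact Finset.sum_congr rfl fun p _ => by ring
        _ = ∑ p, ∑ q, xx p * (U q * H q p) := Finset.sum_comm
        _ = ∑ p, xx p * (∑ q, U q * H q p) := Finset.sum_congr rfl fun p _ => sum_pull _ _
        _ = ∑ p, xx p * (∑ k, U k * H p k) :=
            Finset.sum_congr rfl fun p _ => by rw [symR U H hsym p]
    have eB : ∑ q, U q * (∑ p, H q p * (∑ k, U k * H p k))
        = ∑ i, (∑ k, U k * H i k) * (∑ k, U k * H i k) := by
      calc ∑ q, U q * (∑ p, H q p * (∑ k, U k * H p k))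
          = ∑ q, ∑ p, (∑ k, U k * H p k) * (U q * H q p) := by
            refine Finset.sum_congr rfl fun q _ => ?_
            rw [Finset.mul_sum]
            exact Finset.sum_congr rfl fun p _ => by ring
        _ = ∑ p, ∑ q, (∑ k, U k * H p k) * (U q * H q p) := Finset.sum_comm
        _ = ∑ p, (∑ k, U k * H p k) * (∑ q, U q * H q p) :=
            Finset.sum_congr rfl fun p _ => sum_pull _ _
        _ = ∑ i, (∑ k, U k * H i k) * (∑ k, U k * H i k) :=
            Finset.sum_congr rfl fun p _ => by rw [symR U H hsym p]
    rw [eX, eB]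
  -- the x-term and the λ-term
  have hSL2 : ∑ i, xx i * (2 * (∑ k, U k * H i k) / d)
      = (2/d) * (∑ p, xx p * (∑ k, U k * H p k)) := by
    rw [← sum_pull (2/d) (fun p => xx p * (∑ k, U k * H p k))]
    exact Finset.sum_congr rfl fun i _ => by field_simp
  have hSL3 : ∑ i, U i * (2 * (∑ k, U k * H i k) / d)
      = (2/d) * (∑ i, U i * (∑ k, U k * H i k)) := by
    rw [← sum_pull (2/d) (fun i => U i * (∑ k, U k * H i k))]
    exact Finset.sum_congr rfl fun i _ => by field_simp
  rw [hSL1, hmid, hSL2, hSL3, redD1 U d G hG H hsym,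
    redD3 U d G hG H, red6a U d G hG H hd hd0, red6b U d G hG H hd hd0,
    redV4 U d G hG H, redD1 U d G hG H hsym, redD3 U d G hG H]
  have hs : (∑ i, U i * U i) = d - 1 := by rw [hd]; ring
  rw [hs]
  field_simp
  ring

/-- For an entire smooth solution of the graphic `λ`-hypersurface equation and
`ψ = log det(g_{ij})`, with coefficient matrix `(a_{ij}) = (g_{ij})` one has
`L_{(λ,f)}ψ = −2 Σ g^{ij} g^{pk} g^{ql} f_{pi} f_q f_{kj} f_l
  + 2 Σ g^{ij} g^{pk} g^{ql} f_{qi} f_p f_{kj} f_l + 2 Σ g^{ij} g^{pq} f_{pi} f_{qj}`. -/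
theorem lambda_hypersurface_L_of_log_det_identity
    {n : ℕ} (lam : ℝ) (f : (Fin n → ℝ) → ℝ) (hf : ContDiff ℝ (⊤ : ℕ∞) f)
    (heq : ∀ x : Fin n → ℝ,
      ∑ i, ∑ j, gInv f x i j * pd (pd f j) i x
        = -f x + ∑ i, x i * pd f i x
          + lam * Real.sqrt (1 + ∑ i, (pd f i x) ^ 2))
    (ψ : (Fin n → ℝ) → ℝ) (hψ : ψ = fun x => Real.log (gMat f x).det) :
    ∀ x : Fin n → ℝ,
      Lop lam f (gMat f) ψ x
        = -2 * (∑ i, ∑ j, ∑ p, ∑ k, ∑ q, ∑ l,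
              gInv f x i j * gInv f x p k * gInv f x q l
                * pd (pd f p) i x * pd f q x * pd (pd f k) j x * pd f l x)
          + 2 * (∑ i, ∑ j, ∑ p, ∑ k, ∑ q, ∑ l,
              gInv f x i j * gInv f x p k * gInv f x q l
                * pd (pd f q) i x * pd f p x * pd (pd f k) j x * pd f l x)
          + 2 * (∑ i, ∑ j, ∑ p, ∑ q,
              gInv f x i j * gInv f x p q * pd (pd f p) i x * pd (pd f q) j x) := by
  have hf' : SM f := hf.of_le (by exact_mod_cast le_top)
  intro x
  have hu : ∀ i, SM (pd f i) := pd_smooth hf'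
  have hh : ∀ a b : Fin n, SM (pd (pd f b) a) := fun a b => pd_smooth (hu b) a
  have hsq : ∀ k : Fin n, SM (fun y => (pd f k y)^2) := fun k => (hu k).pow 2
  have hDsm : SM (fun y : Fin n → ℝ => 1 + ∑ k, (pd f k y)^2) :=
    contDiff_const.add (ContDiff.sum fun k _ => hsq k)
  have hD0 : ∀ y : Fin n → ℝ, 0 < 1 + ∑ k, (pd f k y)^2 := fun y => by
    have h := Finset.sum_nonneg (fun k (_ : k ∈ Finset.univ) => sq_nonneg (pd f k y))
    linarith
  have hDne : ∀ y : Fin n → ℝ, (1 + ∑ k, (pd f k y)^2) ≠ 0 := fun y => (hD0 y).ne'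
  have hpdD : ∀ (i : Fin n) (y : Fin n → ℝ), pd (fun z => 1 + ∑ k, (pd f k z)^2) i y
      = ∑ k, 2 * pd f k y * pd (pd f k) i y := by
    intro i y
    rw [pd_add contDiff_const (ContDiff.sum fun k _ => hsq k) i y, pd_const,
      pd_sum Finset.univ (fun k => fun z => (pd f k z)^2) (fun k _ => hsq k) i y, zero_add]
    exact Finset.sum_congr rfl fun k _ => pd_sq (hu k) i y
  have hPsm : ∀ j : Fin n, SM (fun y => ∑ k, 2 * pd f k y * pd (pd f k) j y) :=
    fun j => ContDiff.sum fun k _ => (contDiff_const.mul (hu k)).mul (hh j k)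
  have hmulsum : ∀ i : Fin n, (∑ k, 2 * pd f k x * pd (pd f k) i x)
      = 2 * ∑ k, pd f k x * pd (pd f k) i x := by
    intro i
    rw [Finset.mul_sum]
    exact Finset.sum_congr rfl fun k _ => by ring
  -- ψ as log of 1 + |Df|²
  have hψlog : ψ = fun y => Real.log (1 + ∑ k, (pd f k y)^2) := by
    rw [hψ]; funext y; rw [gdet]
  have hψ1 : ∀ (i : Fin n) (y : Fin n → ℝ), pd ψ i y
      = (∑ k, 2 * pd f k y * pd (pd f k) i y) / (1 + ∑ k, (pd f k y)^2) := by
    intro i y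
    rw [hψlog, pd_log hDsm hD0 i y, hpdD i y]
  have hψ1x : ∀ i : Fin n, pd ψ i x
      = 2 * (∑ k, pd f k x * pd (pd f k) i x) / (1 + ∑ k, (pd f k x)^2) := by
    intro i
    rw [hψ1 i x, hmulsum i]
  -- second derivatives of ψ
  have hψ2 : ∀ i j : Fin n, pd (pd ψ j) i x
      = ((2 * ∑ q, (pd (pd f q) i x * pd (pd f q) j x
              + pd f q x * pd (pd (pd f q) j) i x)) * (1 + ∑ k, (pd f k x)^2)
          - (2 * ∑ k, pd f k x * pd (pd f k) j x) * (2 * ∑ k, pd f k x * pd (pd f k) i x))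
        / (1 + ∑ k, (pd f k x)^2)^2 := by
    intro i j
    have h1 : pd ψ j = fun y => (∑ k, 2 * pd f k y * pd (pd f k) j y)
        / (1 + ∑ k, (pd f k y)^2) := funext fun y => hψ1 j y
    rw [h1, pd_div (hPsm j) hDsm hDne i x, hpdD i x]
    have h2 : pd (fun y => ∑ k, 2 * pd f k y * pd (pd f k) j y) i x
        = ∑ q, (2 * pd (pd f q) i x * pd (pd f q) j x
            + 2 * pd f q x * pd (pd (pd f q) j) i x) := by
      rw [pd_sum Finset.univ (fun k => fun y => 2 * pd f k y * pd (pd f k) j y)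
        (fun k _ => (contDiff_const.mul (hu k)).mul (hh j k)) i x]
      refine Finset.sum_congr rfl fun q _ => ?_
      rw [pd_mul (contDiff_const.mul (hu q)) (hh j q) i x, pd_cmul (hu q) 2 i x]
    rw [h2]
    have h3 : (∑ q, (2 * pd (pd f q) i x * pd (pd f q) j x
            + 2 * pd f q x * pd (pd (pd f q) j) i x))
        = 2 * ∑ q, (pd (pd f q) i x * pd (pd f q) j x
            + pd f q x * pd (pd (pd f q) j) i x) := by
      rw [Finset.mul_sum]
      exact Finset.sum_congr rfl fun q _ => by ring
    rw [h3, hmulsum i, hmulsum j]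
  -- symmetry facts
  have hsymH : ∀ i j : Fin n, pd (pd f j) i x = pd (pd f i) j x :=
    fun i j => pd_pd_symm hf' i j x
  have hT3 : ∀ i j q : Fin n, pd (pd (pd f q) j) i x = pd (pd (pd f j) i) q x := by
    intro i j q
    have hswap : pd (pd f q) j = pd (pd f j) q := funext fun y => pd_pd_symm hf' j q y
    rw [hswap]
    exact pd_pd_symm (hu j) i q x
  -- smoothness of the inverse-metric entries
  have hGsm : ∀ p q : Fin n, SM (fun y => (if p = q then (1:ℝ) else 0)
      - pd f p y * pd f q y / (1 + ∑ k, (pd f k y)^2)) :=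
    fun p q => contDiff_const.sub (((hu p).mul (hu q)).div hDsm hDne)
  -- the equation as an identity of functions with explicit inverse metric
  have hfun : (fun y => ∑ p, ∑ q, ((if p = q then (1:ℝ) else 0)
        - pd f p y * pd f q y / (1 + ∑ k, (pd f k y)^2)) * pd (pd f q) p y)
      = (fun y => -f y + ∑ p, y p * pd f p y
          + lam * Real.sqrt (1 + ∑ k, (pd f k y)^2)) := by
    funext y
    have h1 : ∑ p, ∑ q, ((if p = q then (1:ℝ) else 0)
          - pd f p y * pd f q y / (1 + ∑ k, (pd f k y)^2)) * pd (pd f q) p y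
        = ∑ p, ∑ q, gInv f y p q * pd (pd f q) p y :=
      Finset.sum_congr rfl fun p _ => Finset.sum_congr rfl fun q _ => by
        rw [ginv_eq y p q]
    rw [h1]
    exact heq y
  -- derivative of the left side of the equation
  have hLcomp : ∀ i : Fin n, pd (fun y => ∑ p, ∑ q, ((if p = q then (1:ℝ) else 0)
        - pd f p y * pd f q y / (1 + ∑ k, (pd f k y)^2)) * pd (pd f q) p y) i x
      = ∑ p, ∑ q,
          ((0 - ((pd (pd f p) i x * pd f q x + pd f p x * pd (pd f q) i x)
                  * (1 + ∑ k, (pd f k x)^2)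
                - pd f p x * pd f q x * (∑ k, 2 * pd f k x * pd (pd f k) i x))
              / (1 + ∑ k, (pd f k x)^2)^2) * pd (pd f q) p x
            + ((if p = q then (1:ℝ) else 0)
                - pd f p x * pd f q x / (1 + ∑ k, (pd f k x)^2))
              * pd (pd (pd f q) p) i x) := by
    intro i
    rw [pd_sum Finset.univ (fun p => fun y => ∑ q, ((if p = q then (1:ℝ) else 0)
          - pd f p y * pd f q y / (1 + ∑ k, (pd f k y)^2)) * pd (pd f q) p y)
        (fun p _ => ContDiff.sum fun q _ => (hGsm p q).mul (hh p q)) i x]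
    refine Finset.sum_congr rfl fun p _ => ?_
    rw [pd_sum Finset.univ (fun q => fun y => ((if p = q then (1:ℝ) else 0)
          - pd f p y * pd f q y / (1 + ∑ k, (pd f k y)^2)) * pd (pd f q) p y)
        (fun q _ => (hGsm p q).mul (hh p q)) i x]
    refine Finset.sum_congr rfl fun q _ => ?_
    rw [pd_mul (hGsm p q) (hh p q) i x,
      pd_sub (g := fun y => pd f p y * pd f q y / (1 + ∑ k, (pd f k y)^2)) contDiff_const (((hu p).mul (hu q)).div hDsm hDne) i x, pd_const,
      pd_div ((hu p).mul (hu q)) hDsm hDne i x, pd_mul (hu p) (hu q) i x, hpdD i x]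
  -- derivative of the right side of the equation
  have hRcomp : ∀ i : Fin n, pd (fun y => -f y + ∑ p, y p * pd f p y
        + lam * Real.sqrt (1 + ∑ k, (pd f k y)^2)) i x
      = (-pd f i x + ∑ p, ((if i = p then (1:ℝ) else 0) * pd f p x
            + x p * pd (pd f p) i x))
        + lam * ((∑ k, 2 * pd f k x * pd (pd f k) i x)
            / (2 * Real.sqrt (1 + ∑ k, (pd f k x)^2))) := by
    intro i
    have hsum1 : SM (fun y : Fin n → ℝ => ∑ p, y p * pd f p y) :=
      ContDiff.sum fun p _ => ((ContinuousLinearMap.proj p).contDiff).mul (hu p)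
    have e1 : pd (fun y : Fin n → ℝ => ∑ p, y p * pd f p y) i x
        = ∑ p, ((if i = p then (1:ℝ) else 0) * pd f p x + x p * pd (pd f p) i x) := by
      rw [pd_sum Finset.univ (fun p => fun y => y p * pd f p y)
          (fun p _ => ((ContinuousLinearMap.proj p).contDiff).mul (hu p)) i x]
      refine Finset.sum_congr rfl fun p _ => ?_
      rw [pd_mul (show SM (fun y : Fin n → ℝ => y p) from
        (by fun_prop)) (hu p) i x, pd_coord p i x]
    rw [pd_add (hf'.neg.add hsum1) (contDiff_const.mul (hDsm.sqrt hDne)) i x,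
      pd_add hf'.neg hsum1 i x, pd_neg f i x, e1,
      pd_cmul (hDsm.sqrt hDne) lam i x, pd_sqrt hDsm hD0 i x, hpdD i x]
  -- the differentiated equation in the shape needed by key_algebra
  have hw0 : Real.sqrt (1 + ∑ k, (pd f k x)^2) ≠ 0 :=
    (Real.sqrt_pos.mpr (hD0 x)).ne'
  have heqd : ∀ i : Fin n, ∑ p, ∑ q,
      ((-(((pd (pd f p) i x * pd f q x + pd f p x * pd (pd f q) i x)
              * (1 + ∑ k, (pd f k x)^2)
            - pd f p x * pd f q x * (2 * ∑ k, pd f k x * pd (pd f k) i x))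
          / (1 + ∑ k, (pd f k x)^2)^2))
          * pd (pd f q) p x
        + ((if p = q then (1:ℝ) else 0)
            - pd f p x * pd f q x / (1 + ∑ k, (pd f k x)^2))
          * pd (pd (pd f q) p) i x)
      = (∑ p, x p * pd (pd f p) i x)
        + lam * (2 * ∑ k, pd f k x * pd (pd f k) i x)
            / (2 * Real.sqrt (1 + ∑ k, (pd f k x)^2)) := by
    intro i
    have h : pd (fun y => ∑ p, ∑ q, ((if p = q then (1:ℝ) else 0)
          - pd f p y * pd f q y / (1 + ∑ k, (pd f k y)^2)) * pd (pd f q) p y) i x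
        = pd (fun y => -f y + ∑ p, y p * pd f p y
            + lam * Real.sqrt (1 + ∑ k, (pd f k y)^2)) i x := by rw [hfun]
    rw [hLcomp i, hRcomp i] at h
    have eL : ∑ p, ∑ q,
        ((0 - ((pd (pd f p) i x * pd f q x + pd f p x * pd (pd f q) i x)
                  * (1 + ∑ k, (pd f k x)^2)
              - pd f p x * pd f q x * (∑ k, 2 * pd f k x * pd (pd f k) i x))
            / (1 + ∑ k, (pd f k x)^2)^2) * pd (pd f q) p x
          + ((if p = q then (1:ℝ) else 0)
              - pd f p x * pd f q x / (1 + ∑ k, (pd f k x)^2))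
            * pd (pd (pd f q) p) i x)
        = ∑ p, ∑ q,
        ((-(((pd (pd f p) i x * pd f q x + pd f p x * pd (pd f q) i x)
                * (1 + ∑ k, (pd f k x)^2)
              - pd f p x * pd f q x * (2 * ∑ k, pd f k x * pd (pd f k) i x))
            / (1 + ∑ k, (pd f k x)^2)^2))
            * pd (pd f q) p x
          + ((if p = q then (1:ℝ) else 0)
              - pd f p x * pd f q x / (1 + ∑ k, (pd f k x)^2))
            * pd (pd (pd f q) p) i x) :=
      Finset.sum_congr rfl fun p _ => Finset.sum_congr rfl fun q _ => by
        rw [hmulsum i]; ring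
    rw [eL] at h
    have eR : ∑ p, ((if i = p then (1:ℝ) else 0) * pd f p x + x p * pd (pd f p) i x)
        = pd f i x + ∑ p, x p * pd (pd f p) i x := by
      rw [Finset.sum_add_distrib, sum_if i (fun p => pd f p x)]
    rw [eR, hmulsum i] at h
    linear_combination h
  -- assemble everything
  have hd : (1 + ∑ k, (pd f k x)^2) = 1 + ∑ i, pd f i x * pd f i x := by
    congr 1
    exact Finset.sum_congr rfl fun k _ => pow_two (pd f k x)
  have hd0 : (1 + ∑ k, (pd f k x)^2) ≠ 0 := hDne x
  unfold Lop
  have hGm : ∀ p q : Fin n, (gMat f x)⁻¹ p q = (if p = q then (1:ℝ) else 0)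
      - pd f p x * pd f q x / (1 + ∑ k, (pd f k x)^2) := fun p q => ginv_eq x p q
  have e1 : ∀ i j : Fin n, (gMat f x)⁻¹ i j * pd (pd ψ j) i x
      = ((if i = j then (1:ℝ) else 0)
            - pd f i x * pd f j x / (1 + ∑ k, (pd f k x)^2))
        * (((2 * ∑ q, (pd (pd f q) i x * pd (pd f q) j x
                + pd f q x * pd (pd (pd f q) j) i x)) * (1 + ∑ k, (pd f k x)^2)
            - (2 * ∑ k, pd f k x * pd (pd f k) j x)
              * (2 * ∑ k, pd f k x * pd (pd f k) i x))
          / (1 + ∑ k, (pd f k x)^2)^2) :=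
    fun i j => by rw [hGm i j, hψ2 i j]
  rw [Finset.sum_congr rfl fun i (_ : i ∈ Finset.univ) =>
      Finset.sum_congr rfl fun j _ => e1 i j]
  have e2 : ∀ i : Fin n, x i * pd ψ i x
      = x i * (2 * (∑ k, pd f k x * pd (pd f k) i x) / (1 + ∑ k, (pd f k x)^2)) :=
    fun i => by rw [hψ1x i]
  rw [Finset.sum_congr rfl fun i (_ : i ∈ Finset.univ) => e2 i]
  have e3 : ∀ i : Fin n, pd f i x * pd ψ i x
      = pd f i x * (2 * (∑ k, pd f k x * pd (pd f k) i x) / (1 + ∑ k, (pd f k x)^2)) :=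
    fun i => by rw [hψ1x i]
  rw [Finset.sum_congr rfl fun i (_ : i ∈ Finset.univ) => e3 i]
  have e4 : ∀ i j p k q l : Fin n,
      gInv f x i j * gInv f x p k * gInv f x q l
          * pd (pd f p) i x * pd f q x * pd (pd f k) j x * pd f l x
      = ((if i = j then (1:ℝ) else 0) - pd f i x * pd f j x / (1 + ∑ k, (pd f k x)^2))
        * ((if p = k then (1:ℝ) else 0) - pd f p x * pd f k x / (1 + ∑ k, (pd f k x)^2))
        * ((if q = l then (1:ℝ) else 0) - pd f q x * pd f l x / (1 + ∑ k, (pd f k x)^2))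
        * pd (pd f p) i x * pd f q x * pd (pd f k) j x * pd f l x :=
    fun i j p k q l => by rw [ginv_eq x i j, ginv_eq x p k, ginv_eq x q l]
  rw [Finset.sum_congr rfl fun i (_ : i ∈ Finset.univ) =>
      Finset.sum_congr rfl fun j _ => Finset.sum_congr rfl fun p _ =>
      Finset.sum_congr rfl fun k _ => Finset.sum_congr rfl fun q _ =>
      Finset.sum_congr rfl fun l _ => e4 i j p k q l]
  have e5 : ∀ i j p k q l : Fin n,
      gInv f x i j * gInv f x p k * gInv f x q l
          * pd (pd f q) i x * pd f p x * pd (pd f k) j x * pd f l x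
      = ((if i = j then (1:ℝ) else 0) - pd f i x * pd f j x / (1 + ∑ k, (pd f k x)^2))
        * ((if p = k then (1:ℝ) else 0) - pd f p x * pd f k x / (1 + ∑ k, (pd f k x)^2))
        * ((if q = l then (1:ℝ) else 0) - pd f q x * pd f l x / (1 + ∑ k, (pd f k x)^2))
        * pd (pd f q) i x * pd f p x * pd (pd f k) j x * pd f l x :=
    fun i j p k q l => by rw [ginv_eq x i j, ginv_eq x p k, ginv_eq x q l]
  rw [Finset.sum_congr rfl fun i (_ : i ∈ Finset.univ) =>
      Finset.sum_congr rfl fun j _ => Finset.sum_congr rfl fun p _ =>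
      Finset.sum_congr rfl fun k _ => Finset.sum_congr rfl fun q _ =>
      Finset.sum_congr rfl fun l _ => e5 i j p k q l]
  have e6 : ∀ i j p q : Fin n,
      gInv f x i j * gInv f x p q * pd (pd f p) i x * pd (pd f q) j x
      = ((if i = j then (1:ℝ) else 0) - pd f i x * pd f j x / (1 + ∑ k, (pd f k x)^2))
        * ((if p = q then (1:ℝ) else 0) - pd f p x * pd f q x / (1 + ∑ k, (pd f k x)^2))
        * pd (pd f p) i x * pd (pd f q) j x :=
    fun i j p q => by rw [ginv_eq x i j, ginv_eq x p q]
  rw [Finset.sum_congr rfl fun i (_ : i ∈ Finset.univ) =>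
      Finset.sum_congr rfl fun j _ => Finset.sum_congr rfl fun p _ =>
      Finset.sum_congr rfl fun q _ => e6 i j p q]
  exact key_algebra (fun i => pd f i x) (1 + ∑ k, (pd f k x)^2)
    (fun i j => (if i = j then (1:ℝ) else 0)
      - pd f i x * pd f j x / (1 + ∑ k, (pd f k x)^2))
    (fun i j => rfl)
    (fun i j => pd (pd f j) i x) hsymH hd hd0
    (fun i j q => pd (pd (pd f q) j) i x) x lam
    (Real.sqrt (1 + ∑ k, (pd f k x)^2)) hw0
    (fun i j q => hT3 i j q) heqd
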